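/- arXiv:hep-th/9311171 — 2 statements merged into one kernel-verified Lean document; each statement's English description precedes it below -/
import Mathlib

section
/- The map P ↦ ξ_P intertwines the bracket with the commutator of derivations: for all P, R ∈ π₀, ξ_{ξ_P(R)} = ξ_P ∘ ξ_R − ξ_R ∘ ξ_P as derivations of π₀. -/
open MvPolynomial

noncomputable section

/-- The algebra of differential polynomials in the variables `u_i^{(n)}`, `1 ≤ i ≤ l`, `n ≥ 0`. -/
abbrev Pi0 (l : ℕ) : Type := MvPolynomial (Fin l × ℕ) ℂ

/-- The variable `u_i^{(n)}`. -/
def u {l : ℕ} (i : Fin l) (n : ℕ) : Pi0 l := X (i, n)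

/-- The derivation `∂` with `∂ u_i^{(n)} = u_i^{(n+1)}`. -/
def pa (l : ℕ) : Derivation ℂ (Pi0 l) (Pi0 l) :=
  mkDerivation ℂ (fun p => X (p.1, p.2 + 1))

variable {l : ℕ}

/-- The variational derivative `δ_i P := ∑_{j=1}^l c_{ij} ∑_{n ≥ 0} (-∂)^n (∂P/∂u_j^{(n)})`
associated to a symmetric matrix `c` of complex numbers. -/
def vard (c : Matrix (Fin l) (Fin l) ℂ) (i : Fin l) (P : Pi0 l) : Pi0 l :=
  ∑ j : Fin l, c i j • ∑ᶠ n : ℕ, ((-(pa l).toLinearMap) ^ n) (pderiv (j, n) P)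

/-- The hamiltonian vector field `ξ_P`: the unique `ℂ`-derivation of `π₀` with
`ξ_P u_i^{(n)} = ∂^{n+1}(δ_i P)`. -/
def xic (c : Matrix (Fin l) (Fin l) ℂ) (P : Pi0 l) : Derivation ℂ (Pi0 l) (Pi0 l) :=
  mkDerivation ℂ (fun p => ((pa l).toLinearMap ^ (p.2 + 1)) (vard c p.1 P))

/-!
Both sides are derivations of `π₀` commuting with `∂` (`ξ_Q` is the evolutionary vector field with
characteristic `∂ δ Q`), so it suffices to compare them on the generators `u_i`, i.e. to show
`δ_i (ξ_P R) = ξ_P (δ_i R) - ξ_R (δ_i P)`, and it is enough to do so for the Euler operators `E_k`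
in place of `δ_i`. For an evolutionary derivation `X` with characteristic `F`,
`E_k (X A) = X (E_k A) + ∑_j (D_{F_j})^*_k (E_j A)`, where `D^*` is the formal adjoint of the
Fréchet derivative. For `F = ∂ δ P`, moving `∂` across and using that Fréchet derivatives of Euler
operators are self-adjoint (Helmholtz) turns the correction term into `-ξ_R (E_k P)`; the symmetry
of `c` is what matches the indices.
-/

section Derivations

variable {R σ : Type*} [CommRing R]

theorem Derivation.finsetSum_apply {A M ι : Type*} [CommSemiring A] [Algebra R A] [AddCommGroup M]
    [Module A M] [Module R M] (s : Finset ι) (f : ι → Derivation R A M) (a : A) :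
    (∑ i ∈ s, f i) a = ∑ i ∈ s, f i a := by
  rw [← Derivation.coeFnAddMonoidHom_apply, map_sum, Finset.sum_apply]
  rfl

theorem pderiv_pderiv_comm (i j : σ) (p : MvPolynomial σ R) :
    pderiv i (pderiv j p) = pderiv j (pderiv i p) := by
  have h : ⁅pderiv (R := R) (σ := σ) i, pderiv (R := R) j⁆ = 0 := by
    refine derivation_ext fun k => ?_
    classical
    simp [Derivation.commutator_apply, pderiv_X, Pi.single_apply, apply_ite]
  simpa [Derivation.commutator_apply, sub_eq_zero] using congrArg (· p) h

theorem Derivation.mem_supported_of_forall_X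
    {D : Derivation R (MvPolynomial σ R) (MvPolynomial σ R)} {s t : Set σ} (hst : s ⊆ t)
    (hD : ∀ i ∈ s, D (X i) ∈ supported R t) {p : MvPolynomial σ R} (hp : p ∈ supported R s) :
    D p ∈ supported R t := by
  induction hp using Algebra.adjoin_induction with
  | mem x hx =>
    obtain ⟨i, hi, rfl⟩ := hx
    exact hD i hi
  | algebraMap r => simp [MvPolynomial.algebraMap_eq, derivation_C]
  | add x y _ _ hx hy => simpa using add_mem hx hy
  | mul x y hx' hy' hx hy =>
    rw [Derivation.leibniz]
    exact add_mem (mul_mem (supported_mono hst hx') hy) (mul_mem (supported_mono hst hy') hx)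

theorem derivation_eq_sum_mul_pderiv (D : Derivation R (MvPolynomial σ R) (MvPolynomial σ R))
    {s : Finset σ} {p : MvPolynomial σ R} (hp : p ∈ supported R (s : Set σ)) :
    D p = ∑ w ∈ s, D (X w) * pderiv w p := by
  classical
  have h : D p = (∑ w ∈ s, D (X w) • (pderiv w : Derivation R (MvPolynomial σ R) _)) p := by
    refine derivation_eqOn_supported (fun i hi => ?_) hp
    simp [Derivation.finsetSum_apply, pderiv_X, Pi.single_apply, Finset.mem_coe.1 hi]
  simp [h, Derivation.finsetSum_apply]

theorem pderiv_derivation_apply (D : Derivation R (MvPolynomial σ R) (MvPolynomial σ R)) (v : σ)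
    {s : Finset σ} {p : MvPolynomial σ R} (hp : p ∈ supported R (s : Set σ)) :
    pderiv v (D p) = D (pderiv v p) + ∑ w ∈ s, pderiv v (D (X w)) * pderiv w p := by
  have h := derivation_eq_sum_mul_pderiv ⁅pderiv (R := R) v, D⁆ hp
  have hconst (w : σ) : D (pderiv v (X w)) = 0 := by
    classical
    rw [pderiv_X]
    by_cases hw : v = w <;> simp [hw]
  simp only [Derivation.commutator_apply, hconst, sub_zero] at h
  linear_combination h

end Derivations

section DifferentialPolynomials

open Finset

local notation "𝔡" => Derivation.toLinearMap (pa _)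

theorem pa_X (p : Fin l × ℕ) : pa l (X p) = X (p.1, p.2 + 1) :=
  mkDerivation_X ℂ _ p

theorem pa_pow_succ_apply (n : ℕ) (A : Pi0 l) : (𝔡 ^ (n + 1)) A = pa l ((𝔡 ^ n) A) := by
  rw [pow_succ', Module.End.mul_apply]
  rfl

theorem commutator_pderiv_zero_pa (j : Fin l) : ⁅pderiv (R := ℂ) (j, 0), pa l⁆ = 0 := by
  refine derivation_ext fun w => ?_
  classical
  simp [Derivation.commutator_apply, pa_X, pderiv_X, Pi.single_apply, apply_ite]

theorem commutator_pderiv_succ_pa (j : Fin l) (n : ℕ) :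
    ⁅pderiv (R := ℂ) (j, n + 1), pa l⁆ = pderiv (j, n) := by
  refine derivation_ext fun w => ?_
  classical
  simp [Derivation.commutator_apply, pa_X, pderiv_X, Pi.single_apply, apply_ite, Prod.ext_iff]

theorem pderiv_zero_pa (j : Fin l) (A : Pi0 l) :
    pderiv (j, 0) (pa l A) = pa l (pderiv (j, 0) A) := by
  simpa [Derivation.commutator_apply, sub_eq_zero] using
    congrArg (· A) (commutator_pderiv_zero_pa j)

theorem pderiv_succ_pa (j : Fin l) (n : ℕ) (A : Pi0 l) :
    pderiv (j, n + 1) (pa l A) = pa l (pderiv (j, n + 1) A) + pderiv (j, n) A := by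
  have h := congrArg (· A) (commutator_pderiv_succ_pa j n)
  simp only [Derivation.commutator_apply] at h
  rw [← h, add_sub_cancel]

def lowOrder (N : ℕ) : Subalgebra ℂ (Pi0 l) :=
  supported ℂ ↑(univ ×ˢ range N : Finset (Fin l × ℕ))

theorem mem_lowOrder_iff {N : ℕ} {A : Pi0 l} : A ∈ lowOrder N ↔ ∀ w ∈ A.vars, w.2 < N := by
  simp [lowOrder, mem_supported, Set.subset_def]

theorem lowOrder_mono {N M : ℕ} (h : N ≤ M) : lowOrder N ≤ (lowOrder M : Subalgebra ℂ (Pi0 l)) :=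
  supported_mono (by gcongr)

theorem exists_mem_lowOrder (A : Pi0 l) : ∃ N, A ∈ lowOrder N :=
  ⟨A.vars.sup Prod.snd + 1, mem_lowOrder_iff.2 fun _ hw => Nat.lt_succ_of_le (le_sup hw)⟩

theorem pderiv_eq_zero_of_mem_lowOrder {N n : ℕ} {A : Pi0 l} (hA : A ∈ lowOrder N) (hn : N ≤ n)
    (j : Fin l) : pderiv (j, n) A = 0 :=
  pderiv_eq_zero_of_notMem_vars fun h => (mem_lowOrder_iff.1 hA _ h).not_ge hn

theorem pderiv_mem_lowOrder {N : ℕ} {A : Pi0 l} (hA : A ∈ lowOrder N) (w : Fin l × ℕ) :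
    pderiv w A ∈ lowOrder N := by
  refine Derivation.mem_supported_of_forall_X le_rfl (fun v _ => ?_) hA
  classical
  rw [pderiv_X]
  by_cases h : w = v <;> simp [h]

theorem pa_mem_lowOrder {N : ℕ} {A : Pi0 l} (hA : A ∈ lowOrder N) : pa l A ∈ lowOrder (N + 1) := by
  refine Derivation.mem_supported_of_forall_X (by gcongr; omega) (fun v hv => ?_) hA
  rw [pa_X, X_mem_supported]
  simpa using hv

theorem pa_pow_mem_lowOrder {N : ℕ} {A : Pi0 l} (hA : A ∈ lowOrder N) (r : ℕ) :
    (𝔡 ^ r) A ∈ lowOrder (N + r) := by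
  induction r with
  | zero => simpa using hA
  | succ r ih => rw [pa_pow_succ_apply]; exact pa_mem_lowOrder ih

theorem neg_pa_pow_apply (n : ℕ) (A : Pi0 l) : ((-𝔡) ^ n) A = (-1 : ℂ) ^ n • (𝔡 ^ n) A := by
  rw [← neg_one_smul ℂ (𝔡 : Module.End ℂ (Pi0 l)), smul_pow, LinearMap.smul_apply]

theorem neg_pa_pow_mem_lowOrder {N : ℕ} {A : Pi0 l} (hA : A ∈ lowOrder N) (r : ℕ) :
    ((-𝔡) ^ r) A ∈ lowOrder (N + r) := by
  rw [neg_pa_pow_apply]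
  exact Subalgebra.smul_mem _ (pa_pow_mem_lowOrder hA r) _

def euler (k : Fin l) (A : Pi0 l) : Pi0 l :=
  ∑ᶠ n : ℕ, ((-𝔡) ^ n) (pderiv (k, n) A)

theorem vard_eq_sum_euler (c : Matrix (Fin l) (Fin l) ℂ) (i : Fin l) (P : Pi0 l) :
    vard c i P = ∑ j, c i j • euler j P := rfl

theorem euler_eq_sum_range {N : ℕ} {A : Pi0 l} (hA : A ∈ lowOrder N) (k : Fin l) :
    euler k A = ∑ n ∈ range N, ((-𝔡) ^ n) (pderiv (k, n) A) := by
  refine finsum_eq_sum_of_support_subset _ fun n hn => ?_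
  by_contra h
  rw [coe_range, Set.mem_Iio, not_lt] at h
  exact hn (by simp only [pderiv_eq_zero_of_mem_lowOrder hA h, map_zero])

theorem euler_mem_lowOrder {N : ℕ} {A : Pi0 l} (hA : A ∈ lowOrder N) (k : Fin l) :
    euler k A ∈ lowOrder (N + N) := by
  rw [euler_eq_sum_range hA]
  exact Subalgebra.sum_mem _ fun n hn =>
    lowOrder_mono (by simp at hn; omega) (neg_pa_pow_mem_lowOrder (pderiv_mem_lowOrder hA _) n)

theorem vard_mem_lowOrder (c : Matrix (Fin l) (Fin l) ℂ) {N : ℕ} {A : Pi0 l}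
    (hA : A ∈ lowOrder N) (i : Fin l) : vard c i A ∈ lowOrder (N + N) :=
  Subalgebra.sum_mem _ fun j _ => Subalgebra.smul_mem _ (euler_mem_lowOrder hA j) _

/- The Fréchet derivative `D_B S = ∑ₙ ∂B/∂u_m^{(n)} · ∂ⁿS` and its formal adjoint
`D_B^* S = ∑ₙ (-∂)ⁿ (∂B/∂u_k^{(n)} · S)`, componentwise and truncated at order `M`; once `M`
exceeds the order of `B`, the truncation no longer matters. -/
def frechet (m : Fin l) (M : ℕ) : Pi0 l →ₗ[ℂ] Pi0 l →ₗ[ℂ] Pi0 l :=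
  LinearMap.mk₂ ℂ (fun B S => ∑ n ∈ range M, pderiv (m, n) B * (𝔡 ^ n) S)
    (fun _ _ _ => by simp [add_mul, sum_add_distrib])
    (fun _ _ _ => by simp [smul_sum])
    (fun _ _ _ => by simp [mul_add, sum_add_distrib])
    (fun _ _ _ => by simp [smul_sum])

def frechetAdj (k : Fin l) (M : ℕ) : Pi0 l →ₗ[ℂ] Pi0 l →ₗ[ℂ] Pi0 l :=
  LinearMap.mk₂ ℂ (fun B S => ∑ n ∈ range M, ((-𝔡) ^ n) (pderiv (k, n) B * S))
    (fun _ _ _ => by simp [add_mul, sum_add_distrib])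
    (fun _ _ _ => by simp [smul_sum])
    (fun _ _ _ => by simp [mul_add, sum_add_distrib])
    (fun _ _ _ => by simp [smul_sum])

theorem frechet_apply (m : Fin l) (M : ℕ) (B S : Pi0 l) :
    frechet m M B S = ∑ n ∈ range M, pderiv (m, n) B * (𝔡 ^ n) S := rfl

theorem frechetAdj_apply (k : Fin l) (M : ℕ) (B S : Pi0 l) :
    frechetAdj k M B S = ∑ n ∈ range M, ((-𝔡) ^ n) (pderiv (k, n) B * S) := rfl

theorem frechet_eq_of_le {N M : ℕ} {B : Pi0 l} (hB : B ∈ lowOrder N) (hM : N ≤ M) (m : Fin l)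
    (S : Pi0 l) : frechet m M B S = frechet m N B S := by
  refine (sum_subset (range_subset_range.2 hM) fun n _ hn => ?_).symm
  rw [pderiv_eq_zero_of_mem_lowOrder hB (by simpa using hn), zero_mul]

theorem frechetAdj_eq_of_le {N M : ℕ} {B : Pi0 l} (hB : B ∈ lowOrder N) (hM : N ≤ M) (k : Fin l)
    (S : Pi0 l) : frechetAdj k M B S = frechetAdj k N B S := by
  refine (sum_subset (range_subset_range.2 hM) fun n _ hn => ?_).symm
  rw [pderiv_eq_zero_of_mem_lowOrder hB (by simpa using hn), zero_mul, map_zero]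

theorem pa_mul (A B : Pi0 l) : pa l (A * B) = pa l A * B + A * pa l B := by
  rw [Derivation.leibniz, smul_eq_mul, smul_eq_mul]
  ring

theorem frechet_pa_succ (m : Fin l) (M : ℕ) (B S : Pi0 l) :
    frechet m (M + 1) (pa l B) S
      = pa l (frechet m (M + 1) B S) - pderiv (m, M) B * (𝔡 ^ (M + 1)) S := by
  induction M with
  | zero => simp [frechet_apply, pderiv_zero_pa, mul_comm]
  | succ M ih =>
    rw [frechet_apply, sum_range_succ, ← frechet_apply, ih, frechet_apply _ (M + 1 + 1),
      sum_range_succ, ← frechet_apply, pderiv_succ_pa, map_add, pa_mul, pa_pow_succ_apply (M + 1)]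
    ring

theorem frechetAdj_pa_succ (k : Fin l) (M : ℕ) (B S : Pi0 l) :
    frechetAdj k (M + 1) (pa l B) S + frechetAdj k (M + 1) B (pa l S)
      = -((-𝔡) ^ (M + 1)) (pderiv (k, M) B * S) := by
  induction M with
  | zero => simp [frechetAdj_apply, pderiv_zero_pa, mul_comm]
  | succ M ih =>
    simp only [frechetAdj_apply, sum_range_succ _ (M + 1)] at ih ⊢
    rw [pderiv_succ_pa, add_mul, map_add]
    have hlast : ((-𝔡) ^ (M + 1)) (pa l (pderiv (k, M + 1) B) * S)
        + ((-𝔡) ^ (M + 1)) (pderiv (k, M + 1) B * pa l S)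
        = -((-𝔡) ^ (M + 1 + 1)) (pderiv (k, M + 1) B * S) := by
      rw [pow_succ _ (M + 1), Module.End.mul_apply, LinearMap.neg_apply, map_neg, neg_neg,
        ← map_add, Derivation.coeFn_coe, pa_mul]
    linear_combination (norm := abel_nf) ih + hlast

theorem frechet_pa {N M : ℕ} {B : Pi0 l} (hB : B ∈ lowOrder N) (hM : N < M) (m : Fin l)
    (S : Pi0 l) : frechet m M (pa l B) S = pa l (frechet m M B S) := by
  obtain ⟨M, rfl⟩ := Nat.exists_eq_add_of_lt hM
  rw [frechet_pa_succ, pderiv_eq_zero_of_mem_lowOrder hB (by omega), zero_mul, sub_zero]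

theorem frechet_pa_pow {N M r : ℕ} {B : Pi0 l} (hB : B ∈ lowOrder N) (hM : N + r ≤ M)
    (m : Fin l) (S : Pi0 l) : frechet m M ((𝔡 ^ r) B) S = (𝔡 ^ r) (frechet m M B S) := by
  induction r with
  | zero => rfl
  | succ r ih =>
    rw [pa_pow_succ_apply, pa_pow_succ_apply, frechet_pa (pa_pow_mem_lowOrder hB r) (by omega),
      ih (by omega)]

theorem frechetAdj_pa {N M : ℕ} {B : Pi0 l} (hB : B ∈ lowOrder N) (hM : N < M) (k : Fin l)
    (S : Pi0 l) : frechetAdj k M (pa l B) S = -frechetAdj k M B (pa l S) := by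
  obtain ⟨M, rfl⟩ := Nat.exists_eq_add_of_lt hM
  rw [eq_neg_iff_add_eq_zero, frechetAdj_pa_succ, pderiv_eq_zero_of_mem_lowOrder hB (by omega),
    zero_mul, map_zero, neg_zero]

theorem frechetAdj_pa_pow {N M r : ℕ} {B : Pi0 l} (hB : B ∈ lowOrder N) (hM : N + r ≤ M)
    (k : Fin l) (S : Pi0 l) : frechetAdj k M ((𝔡 ^ r) B) S = frechetAdj k M B (((-𝔡) ^ r) S) := by
  induction r generalizing S with
  | zero => rfl
  | succ r ih =>
    rw [pa_pow_succ_apply, frechetAdj_pa (pa_pow_mem_lowOrder hB r) (by omega), ih (by omega),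
      pow_succ, Module.End.mul_apply, LinearMap.neg_apply, map_neg, map_neg]
    rfl

-- Helmholtz: the Fréchet derivative of an Euler operator is formally self-adjoint.
theorem frechetAdj_euler {N M : ℕ} {P : Pi0 l} (hP : P ∈ lowOrder N) (hM : N + N ≤ M)
    (k m : Fin l) (S : Pi0 l) : frechetAdj k M (euler m P) S = frechet m M (euler k P) S := by
  have hL : frechetAdj k M (euler m P) S
      = ∑ r ∈ range N, frechetAdj k N (pderiv (m, r) P) ((𝔡 ^ r) S) := by
    rw [euler_eq_sum_range hP, map_sum, LinearMap.sum_apply]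
    refine sum_congr rfl fun r hr => ?_
    have hr : N + r ≤ M := by simp at hr; omega
    rw [neg_pa_pow_apply, map_smul, LinearMap.smul_apply,
      frechetAdj_pa_pow (pderiv_mem_lowOrder hP _) hr, neg_pa_pow_apply, map_smul, smul_smul,
      ← mul_pow, neg_one_mul, neg_neg, one_pow, one_smul,
      frechetAdj_eq_of_le (pderiv_mem_lowOrder hP _) (by omega)]
  have hR : frechet m M (euler k P) S
      = ∑ r ∈ range N, ((-𝔡) ^ r) (frechet m N (pderiv (k, r) P) S) := by
    rw [euler_eq_sum_range hP, map_sum, LinearMap.sum_apply]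
    refine sum_congr rfl fun r hr => ?_
    have hr : N + r ≤ M := by simp at hr; omega
    rw [neg_pa_pow_apply, map_smul, LinearMap.smul_apply,
      frechet_pa_pow (pderiv_mem_lowOrder hP _) hr,
      frechet_eq_of_le (pderiv_mem_lowOrder hP _) (by omega), ← neg_pa_pow_apply]
  rw [hL, hR]
  simp only [frechetAdj_apply, frechet_apply, map_sum]
  rw [sum_comm]
  exact sum_congr rfl fun n _ => sum_congr rfl fun r _ => by rw [pderiv_pderiv_comm]

section CommutingDerivation

variable {D : Derivation ℂ (Pi0 l) (Pi0 l)} (hD : Commute (D : Module.End ℂ (Pi0 l)) 𝔡)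
include hD

theorem apply_X_of_commute_pa (j : Fin l) (m : ℕ) : D (X (j, m)) = (𝔡 ^ m) (D (X (j, 0))) := by
  induction m with
  | zero => rfl
  | succ m ih =>
    have h : X (j, m + 1) = pa l (X (j, m)) := (pa_X (j, m)).symm
    rw [h, pa_pow_succ_apply, ← ih]
    exact LinearMap.congr_fun hD.eq _

theorem apply_pa_pow_of_commute_pa (n : ℕ) (A : Pi0 l) : D ((𝔡 ^ n) A) = (𝔡 ^ n) (D A) :=
  LinearMap.congr_fun (hD.pow_right n).eq A

theorem apply_neg_pa_pow_of_commute_pa (n : ℕ) (A : Pi0 l) :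
    D (((-𝔡) ^ n) A) = ((-𝔡) ^ n) (D A) :=
  LinearMap.congr_fun (hD.neg_right.pow_right n).eq A

theorem apply_eq_sum_frechet {M : ℕ} {B : Pi0 l} (hB : B ∈ lowOrder M) :
    D B = ∑ j, frechet j M B (D (X (j, 0))) := by
  rw [derivation_eq_sum_mul_pderiv D hB, sum_product]
  refine sum_congr rfl fun j _ => sum_congr rfl fun n _ => ?_
  rw [apply_X_of_commute_pa hD, mul_comm]

theorem euler_apply_of_commute_pa {N K M : ℕ} (hF : ∀ j, D (X (j, 0)) ∈ lowOrder N) {A : Pi0 l}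
    (hA : A ∈ lowOrder K) (hDA : D A ∈ lowOrder M) (hM : N + K ≤ M) (k : Fin l) :
    euler k (D A) = D (euler k A) + ∑ j, frechetAdj k M (D (X (j, 0))) (euler j A) := by
  have hadj (j : Fin l) : frechetAdj k M (D (X (j, 0))) (euler j A)
      = ∑ m ∈ range K, frechetAdj k M ((𝔡 ^ m) (D (X (j, 0)))) (pderiv (j, m) A) := by
    rw [euler_eq_sum_range hA, map_sum]
    exact sum_congr rfl fun m hm => (frechetAdj_pa_pow (hF j) (by simp at hm; omega) k _).symm
  calc euler k (D A)
      = ∑ n ∈ range M, (D (((-𝔡) ^ n) (pderiv (k, n) A)) + ∑ j, ∑ m ∈ range K,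
          ((-𝔡) ^ n) (pderiv (k, n) ((𝔡 ^ m) (D (X (j, 0)))) * pderiv (j, m) A)) := by
        rw [euler_eq_sum_range hDA]
        refine sum_congr rfl fun n _ => ?_
        rw [pderiv_derivation_apply D _ hA, sum_product, map_add, map_sum,
          apply_neg_pa_pow_of_commute_pa hD]
        refine congrArg _ (sum_congr rfl fun j _ => ?_)
        rw [map_sum]
        exact sum_congr rfl fun m _ => by rw [apply_X_of_commute_pa hD]
    _ = D (euler k A) + ∑ j, frechetAdj k M (D (X (j, 0))) (euler j A) := by
        rw [sum_add_distrib, ← map_sum, ← euler_eq_sum_range (lowOrder_mono (by omega) hA),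
          sum_comm]
        simp only [hadj, frechetAdj_apply]
        rw [sum_congr rfl fun j _ => sum_comm]

end CommutingDerivation

theorem xic_X (c : Matrix (Fin l) (Fin l) ℂ) (Q : Pi0 l) (p : Fin l × ℕ) :
    xic c Q (X p) = (𝔡 ^ (p.2 + 1)) (vard c p.1 Q) :=
  mkDerivation_X ℂ _ p

theorem xic_X_zero (c : Matrix (Fin l) (Fin l) ℂ) (Q : Pi0 l) (j : Fin l) :
    xic c Q (X (j, 0)) = pa l (vard c j Q) := by
  rw [xic_X, zero_add, pow_one]
  rfl

theorem commute_xic_pa (c : Matrix (Fin l) (Fin l) ℂ) (Q : Pi0 l) :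
    Commute (xic c Q : Module.End ℂ (Pi0 l)) 𝔡 := by
  have h : ⁅xic c Q, pa l⁆ = 0 := derivation_ext fun p => by
    rw [Derivation.commutator_apply, pa_X, xic_X, xic_X, pa_pow_succ_apply (p.2 + 1), sub_self]
    rfl
  exact LinearMap.ext fun A => by
    simpa [Derivation.commutator_apply, sub_eq_zero] using congrArg (· A) h

theorem frechetAdj_pa_vard (c : Matrix (Fin l) (Fin l) ℂ) {N M : ℕ} {P : Pi0 l}
    (hP : P ∈ lowOrder N) (hM : N + N < M) (k j : Fin l) (S : Pi0 l) :
    frechetAdj k M (pa l (vard c j P)) S = -∑ m, c j m • frechet m M (euler k P) (pa l S) := by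
  rw [frechetAdj_pa (vard_mem_lowOrder c hP j) hM, vard_eq_sum_euler, map_sum, LinearMap.sum_apply]
  congr 1
  refine sum_congr rfl fun m _ => ?_
  rw [map_smul, LinearMap.smul_apply, frechetAdj_euler hP hM.le]

theorem euler_xic_apply {c : Matrix (Fin l) (Fin l) ℂ} (hc : c.IsSymm) (P R : Pi0 l) (k : Fin l) :
    euler k (xic c P R) = xic c P (euler k R) - xic c R (euler k P) := by
  obtain ⟨N₁, hP⟩ := exists_mem_lowOrder P
  obtain ⟨N₂, hR⟩ := exists_mem_lowOrder R
  obtain ⟨K, hK⟩ := exists_mem_lowOrder (xic c P R)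
  set N := N₁ + N₂
  replace hP : P ∈ lowOrder N := lowOrder_mono (by omega) hP
  replace hR : R ∈ lowOrder N := lowOrder_mono (by omega) hR
  set M := N + N + 1 + N + K with hM
  have hF (j : Fin l) : xic c P (X (j, 0)) ∈ lowOrder (N + N + 1) := by
    rw [xic_X_zero]
    exact pa_mem_lowOrder (vard_mem_lowOrder c hP j)
  rw [euler_apply_of_commute_pa (commute_xic_pa c P) hF hR (lowOrder_mono (by omega) hK)
      (by omega : N + N + 1 + N ≤ M) k,
    apply_eq_sum_frechet (commute_xic_pa c R)
      (lowOrder_mono (by omega : N + N ≤ M) (euler_mem_lowOrder hP k))]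
  simp only [xic_X_zero, frechetAdj_pa_vard c hP (by omega : N + N < M)]
  simp only [vard_eq_sum_euler, map_sum, Derivation.map_smul, map_smul, sum_neg_distrib]
  rw [sum_comm]
  simp only [hc.apply, sub_eq_add_neg]

theorem vard_xic_apply {c : Matrix (Fin l) (Fin l) ℂ} (hc : c.IsSymm) (P R : Pi0 l) (i : Fin l) :
    vard c i (xic c P R) = xic c P (vard c i R) - xic c R (vard c i P) := by
  simp only [vard_eq_sum_euler, map_sum, Derivation.map_smul, euler_xic_apply hc, smul_sub,
    sum_sub_distrib]

end DifferentialPolynomials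

theorem xi_intertwines_bracket_general (l : ℕ)
    (c : Matrix (Fin l) (Fin l) ℂ) (hc : c.IsSymm) (P R : Pi0 l) :
    ∀ x : Pi0 l, xic c (xic c P R) x = xic c P (xic c R x) - xic c R (xic c P x) := by
  have h : xic c (xic c P R) = ⁅xic c P, xic c R⁆ := derivation_ext fun p => by
    rw [Derivation.commutator_apply, xic_X, xic_X, xic_X, vard_xic_apply hc, map_sub,
      apply_pa_pow_of_commute_pa (commute_xic_pa c P),
      apply_pa_pow_of_commute_pa (commute_xic_pa c R)]
  intro x
  rw [h, Derivation.commutator_apply]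

/-- `ξ_{ξ_P(R)} = ξ_P ∘ ξ_R − ξ_R ∘ ξ_P` as derivations of `π₀`. -/
theorem xi_intertwines_bracket (l : ℕ) (hl : 1 ≤ l)
    (c : Matrix (Fin l) (Fin l) ℂ) (hc : c.IsSymm) (P R : Pi0 l) :
    ∀ x : Pi0 l, xic c (xic c P R) x = xic c P (xic c R x) - xic c R (xic c P x) :=
  xi_intertwines_bracket_general l c hc P R
end
end

section
/- Assume the matrix C := ((α_i,α_j))_{1 ≤ i,j ≤ l} is invertible and set h₁ := (1/2) ∑_{i,j=1}^l (C^{-1})_{ij} u_i^{(0)} u_j^{(0)} ∈ π₀. Then for every i ∈ {0, …, l}, Q_i(h₁) = −u_i^{(0)} = ∂(1) − u_i^{(0)}·1; in particular Q_i(h₁) lies in the image of the twisted derivative P ↦ ∂P − u_i^{(0)}P for every i, so the local functional ∫h₁ is a Toda integral (it lies in the kernel of each induced operator Q̄_i). -/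
open MvPolynomial

noncomputable section

/-- An affine generalized Cartan matrix of size `(l+1) × (l+1)`: an indecomposable integer
matrix with `a_{ii} = 2`, `a_{ij} ≤ 0` for `i ≠ j`, `a_{ij} = 0 ↔ a_{ji} = 0`, symmetrizable
by positive rationals `d_i`, and admitting a vector of positive integer labels `(a_0,…,a_l)`
with `∑_j a_j a_{ij} = 0` for all `i`. -/
structure AffineGCM (l : ℕ) where
  A : Matrix (Fin (l+1)) (Fin (l+1)) ℤ
  diag : ∀ i, A i i = 2
  offdiag : ∀ i j, i ≠ j → A i j ≤ 0
  zeroIff : ∀ i j, A i j = 0 ↔ A j i = 0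
  d : Fin (l+1) → ℚ
  d_pos : ∀ i, 0 < d i
  dsymm : ∀ i j, d i * A i j = d j * A j i
  label : Fin (l+1) → ℕ
  label_pos : ∀ i, 0 < label i
  null : ∀ i, ∑ j, (label j : ℤ) * A i j = 0
  indec : ∀ S : Set (Fin (l+1)), (∀ i ∈ S, ∀ j ∉ S, A i j = 0) → S = ∅ ∨ S = Set.univ

namespace AffineGCM

variable {l : ℕ} (K : AffineGCM l)

/-- The symmetrized bilinear form `(α_i, α_j) := d_i a_{ij}`. -/
def B (i j : Fin (l+1)) : ℂ := (K.d i : ℂ) * (K.A i j : ℂ)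

/-- `u_j^{(n)}` for `j = 0,…,l`, where `u_0^{(n)} := -(1/a_0) ∑_{i=1}^l a_i u_i^{(n)}`.
Here `j = 0` is `Fin.cases`' zero case and `j = i.succ` corresponds to `u_i^{(n)}`. -/
def Uv (j : Fin (l+1)) (n : ℕ) : Pi0 l :=
  Fin.cases (-(1 / (K.label 0 : ℂ)) • ∑ i : Fin l, (K.label i.succ : ℂ) • u i n)
    (fun i => u i n) j

/-- The Faà di Bruno polynomials: `B_i^{(0)} = 1`,
`B_i^{(n+1)} = -u_i^{(0)} B_i^{(n)} + ∂ B_i^{(n)}`. -/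
def FdB (i : Fin (l+1)) : ℕ → Pi0 l
  | 0 => 1
  | n+1 => -(K.Uv i 0) * FdB i n + pa l (FdB i n)

/-- The unique `ℂ`-derivation `Q_i` of `π₀` with `Q_i u_j^{(n)} = -(α_i,α_j) B_i^{(n)}`
for `1 ≤ j ≤ l`, `n ≥ 0`. -/
def Q (i : Fin (l+1)) : Derivation ℂ (Pi0 l) (Pi0 l) :=
  mkDerivation ℂ (fun p => -(K.B i p.1.succ) • K.FdB i p.2)

end AffineGCM

/-- The matrix `C = ((α_i,α_j))_{1 ≤ i,j ≤ l}`. -/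
def Cmat {l : ℕ} (K : AffineGCM l) : Matrix (Fin l) (Fin l) ℂ :=
  Matrix.of fun i j => K.B i.succ j.succ

/-- `h₁ := (1/2) ∑_{i,j=1}^l (C⁻¹)_{ij} u_i^{(0)} u_j^{(0)}`. -/
def hOne {l : ℕ} (K : AffineGCM l) : Pi0 l :=
  (1/2 : ℂ) • ∑ i : Fin l, ∑ j : Fin l, (Cmat K)⁻¹ i j • (u i 0 * u j 0)

/-!
Since `B_i^{(0)} = 1`, the derivation `Q_i` sends `u_j^{(0)}` to the constant `-(α_i, α_j)`, so
on the quadratic form `h₁` it acts as `Q_i(h₁) = -∑_k (C⁻¹ b_i)_k u_k^{(0)}` with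
`b_i = ((α_i, α_j))_{j ≥ 1}`. Writing `α_i = ∑_k c_{ik} α_k` with `c_0 = -(1/a_0)(a_1, …, a_l)`
(the null vector of the Cartan matrix) and `c_i = e_i` for `i ≥ 1`, we get `b_i = C c_i`, hence
`C⁻¹ b_i = c_i` and `Q_i(h₁) = -∑_k c_{ik} u_k^{(0)} = -u_i^{(0)} = ∂ 1 - u_i^{(0)} · 1`.
-/

open Matrix

theorem Derivation.map_sum_sum_smul_mul_of_isSymm {R A n : Type*} [CommRing R] [CommRing A]
    [Algebra R A] [Fintype n] (D : Derivation R A A) {M : Matrix n n R} (hM : M.IsSymm)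
    {x : n → A} {v : n → R} (hD : ∀ k, D (x k) = algebraMap R A (v k)) :
    D (∑ j, ∑ k, M j k • (x j * x k)) = 2 • ∑ j, (M *ᵥ v) j • x j := by
  have hterm : ∀ j k, D (M j k • (x j * x k)) = (M j k * v k) • x j + (M k j * v j) • x k := by
    intro j k
    rw [D.map_smul, D.leibniz, hD, hD, hM.apply k j, add_comm]
    simp only [Algebra.smul_def, map_mul, Algebra.algebraMap_self_apply]
    ring
  simp only [map_sum, hterm, Finset.sum_add_distrib]
  rw [Finset.sum_comm (f := fun j k => (M k j * v j) • x k), two_smul]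
  simp only [mulVec, dotProduct, Finset.sum_smul]

namespace AffineGCM

variable {l : ℕ} (K : AffineGCM l)

theorem B_symm (i j : Fin (l+1)) : K.B i j = K.B j i := by
  simpa only [B, Rat.cast_mul, Rat.cast_intCast] using congrArg (Rat.cast : ℚ → ℂ) (K.dsymm i j)

theorem sum_label_mul_B (i : Fin (l+1)) : ∑ j, (K.label j : ℂ) * K.B i j = 0 := by
  have h := congrArg (Int.cast : ℤ → ℂ) (K.null i)
  push_cast at h
  simp only [B, mul_left_comm _ (K.d i : ℂ), ← Finset.mul_sum, h, mul_zero]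

/-- The coordinates of `α_i` in the basis `α_1, …, α_l`. -/
def coord (i : Fin (l+1)) : Fin l → ℂ :=
  Fin.cases (fun k => -(K.label k.succ / K.label 0 : ℂ)) (fun m => Pi.single m 1) i

theorem Uv_eq_sum_coord_smul (i : Fin (l+1)) (n : ℕ) :
    K.Uv i n = ∑ k, K.coord i k • u k n := by
  cases i using Fin.cases with
  | zero =>
    simp only [Uv, coord, Fin.cases_zero, Finset.smul_sum, smul_smul]
    exact Finset.sum_congr rfl fun k _ => by ring_nf
  | succ m => simp [Uv, coord, Pi.single_apply]

theorem Cmat_mulVec_coord (i : Fin (l+1)) : Cmat K *ᵥ K.coord i = fun j => K.B j.succ i := by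
  ext j
  cases i using Fin.cases with
  | zero =>
    have hnull := K.sum_label_mul_B j.succ
    rw [Fin.sum_univ_succ] at hnull
    have ha : (K.label 0 : ℂ) ≠ 0 := by exact_mod_cast (K.label_pos 0).ne'
    simp only [mulVec, dotProduct, Cmat, coord, Fin.cases_zero, of_apply, mul_neg,
      Finset.sum_neg_distrib, mul_div_assoc', ← Finset.sum_div]
    field_simp
    simp only [mul_comm (K.B _ _)]
    linear_combination -hnull
  | succ m => simp [mulVec, dotProduct, Cmat, coord, Pi.single_apply]

theorem Cmat_isSymm : (Cmat K).IsSymm := by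
  ext i j
  exact K.B_symm j.succ i.succ

theorem Q_u_zero (i : Fin (l+1)) (j : Fin l) :
    K.Q i (u j 0) = algebraMap ℂ (Pi0 l) (-K.B i j.succ) := by
  simp [Q, u, mkDerivation_X, FdB, algebraMap_eq, smul_eq_C_mul]

theorem inv_Cmat_mulVec_B (hdet : IsUnit (Cmat K).det) (i : Fin (l+1)) :
    (Cmat K)⁻¹ *ᵥ (fun j => K.B i j.succ) = K.coord i := by
  simp_rw [K.B_symm i, ← K.Cmat_mulVec_coord, mulVec_mulVec, nonsing_inv_mul _ hdet, one_mulVec]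

theorem Q_hOne (hdet : IsUnit (Cmat K).det) (i : Fin (l+1)) : K.Q i (hOne K) = -K.Uv i 0 := by
  have hQu : ∀ j, K.Q i (u j 0) = algebraMap ℂ (Pi0 l) ((-fun j => K.B i j.succ) j) :=
    K.Q_u_zero i
  rw [hOne, Derivation.map_smul,
    Derivation.map_sum_sum_smul_mul_of_isSymm _ K.Cmat_isSymm.inv hQu, mulVec_neg,
    K.inv_Cmat_mulVec_B hdet, K.Uv_eq_sum_coord_smul]
  simp only [Pi.neg_apply, neg_smul, Finset.sum_neg_distrib]
  module

end AffineGCM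

theorem h1_is_toda_integral_density_general (l : ℕ) (K : AffineGCM l)
    (hdet : IsUnit (Cmat K).det) :
    ∀ i : Fin (l+1),
      K.Q i (hOne K) = -(K.Uv i 0) ∧
      ∃ S : Pi0 l, K.Q i (hOne K) = pa l S - K.Uv i 0 * S := by
  intro i
  have hQ := K.Q_hOne hdet i
  exact ⟨hQ, 1, by simp [hQ]⟩

/-- if `C = ((α_i,α_j))_{1≤i,j≤l}` is invertible then for every `i = 0,…,l`,
`Q_i(h₁) = −u_i^{(0)} = ∂(1) − u_i^{(0)}·1`; in particular `Q_i(h₁)` lies in the image of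
the twisted derivative `P ↦ ∂P − u_i^{(0)} P`, so `∫ h₁` is a Toda integral. -/
theorem h1_is_toda_integral_density (l : ℕ) (hl : 1 ≤ l) (K : AffineGCM l)
    (hdet : IsUnit (Cmat K).det) :
    ∀ i : Fin (l+1),
      K.Q i (hOne K) = -(K.Uv i 0) ∧
      ∃ S : Pi0 l, K.Q i (hOne K) = pa l S - K.Uv i 0 * S :=
  h1_is_toda_integral_density_general l K hdet
end
end
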